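/- Suppose A satisfies the ℓ1-isometry bounds m^{-1}||A(X)||_1 ≤ (1+δ)||X||_1 for X ⪰ 0 and m^{-1}||A(X)||_1 ≥ 0.94(1−δ)||X||_op for X ∈ T, with δ ≤ 1/9, and there exists Y = A^*(λ) with ||Y_T||_1 ≤ 1/2, Y_{T^⊥} ⪰ I_{T^⊥}, and ||λ||_1 ≤ 5. Then any X ⪰ 0 with ||A(X) − b||_2 ≤ ε (where b = A(X_0), X_0 = x_0 x_0^T, ||X_0||_2 = 1) satisfies ||X − X_0||_2 ≤ C ε for an absolute constant C > 0 (depending only on δ). -/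

import Mathlib

/-!
Write `H = X - X₀ = H_T + H_⊥` with `H_⊥ = P_{T^⊥} X P_{T^⊥} ⪰ 0`. Since `H_⊥ x₀ = 0`, the
certificate gives `tr H_⊥ ≤ ⟨Y, H_⊥⟩ = ⟨Y, H⟩ - ⟨Y_T, H_T⟩ ≤ ‖λ‖₁ ‖A(H)‖₂ + ½ ‖H_T‖₂`, while the
two isometry bounds give `0.94 (1 - δ) ‖H_T‖_op ≤ m⁻¹ ‖A(H_T)‖₁ ≤ ε + (1 + δ) tr H_⊥`. As `H_T` has
rank at most two, `‖H_T‖₂ ≤ √2 ‖H_T‖_op`; for `δ ≤ 1/9` the coefficient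
`0.94 (1 - δ) - (1 + δ)/√2` stays positive, so the bounds close up to
`‖H‖₂ ≤ ‖H_T‖₂ + tr H_⊥ ≤ 300 ε`.
-/

open Matrix

/-- Nuclear norm (sum of singular values) of a real square matrix. -/
noncomputable def nucNorm {n : ℕ} (M : Matrix (Fin n) (Fin n) ℝ) : ℝ :=
  ∑ i, Real.sqrt ((show (Mᵀ * M).IsHermitian by
    simpa using Matrix.isHermitian_conjTranspose_mul_self M).eigenvalues i)

/-- Spectral (operator) norm of a real square matrix. -/
noncomputable def opNorm {n : ℕ} (M : Matrix (Fin n) (Fin n) ℝ) : ℝ :=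
  ‖LinearMap.toContinuousLinearMap (Matrix.toEuclideanLin M)‖

/-- Orthogonal projection onto `T^⊥`: `X ↦ (I − x₀x₀ᵀ) X (I − x₀x₀ᵀ)`. -/
noncomputable def TperpProj {n : ℕ} (x0 : Fin n → ℝ) (X : Matrix (Fin n) (Fin n) ℝ) :
    Matrix (Fin n) (Fin n) ℝ :=
  (1 - vecMulVec x0 x0) * X * (1 - vecMulVec x0 x0)

/-- Orthogonal projection onto `T`. -/
noncomputable def TProj {n : ℕ} (x0 : Fin n → ℝ) (X : Matrix (Fin n) (Fin n) ℝ) :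
    Matrix (Fin n) (Fin n) ℝ :=
  X - TperpProj x0 X


/-- Frobenius norm of a real square matrix. -/
noncomputable def frobNorm {n : ℕ} (M : Matrix (Fin n) (Fin n) ℝ) : ℝ :=
  Real.sqrt (Matrix.trace (Mᵀ * M))

section Norms

variable {n : ℕ}

lemma frobNorm_eq_norm_vec (M : Matrix (Fin n) (Fin n) ℝ) :
    frobNorm M = ‖WithLp.toLp 2 M.vec‖ := by
  rw [frobNorm, ← vec_dotProduct_vec, EuclideanSpace.norm_eq]
  simp [dotProduct, sq]

lemma sq_frobNorm (M : Matrix (Fin n) (Fin n) ℝ) : frobNorm M ^ 2 = (Mᵀ * M).trace := by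
  rw [frobNorm_eq_norm_vec, EuclideanSpace.real_norm_sq_eq, ← vec_dotProduct_vec]
  simp [dotProduct, sq]

lemma frobNorm_nonneg (M : Matrix (Fin n) (Fin n) ℝ) : 0 ≤ frobNorm M :=
  Real.sqrt_nonneg _

lemma frobNorm_add_le (A B : Matrix (Fin n) (Fin n) ℝ) :
    frobNorm (A + B) ≤ frobNorm A + frobNorm B := by
  simpa only [frobNorm_eq_norm_vec, vec_add, WithLp.toLp_add] using norm_add_le _ _

lemma frobNorm_transpose (M : Matrix (Fin n) (Fin n) ℝ) : frobNorm Mᵀ = frobNorm M := by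
  rw [frobNorm, frobNorm, transpose_transpose, trace_mul_comm]

lemma abs_trace_mul_le_frobNorm_mul (A B : Matrix (Fin n) (Fin n) ℝ) :
    |(A * B).trace| ≤ frobNorm A * frobNorm B := by
  have h := abs_real_inner_le_norm (WithLp.toLp 2 Aᵀ.vec) (WithLp.toLp 2 B.vec)
  rwa [EuclideanSpace.inner_toLp_toLp, star_trivial, dotProduct_comm, vec_dotProduct_vec,
    transpose_transpose, ← frobNorm_eq_norm_vec, ← frobNorm_eq_norm_vec,
    frobNorm_transpose] at h

lemma norm_toLp_mulVec_le_opNorm_mul (M : Matrix (Fin n) (Fin n) ℝ) (v : Fin n → ℝ) :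
    ‖WithLp.toLp 2 (M *ᵥ v)‖ ≤ opNorm M * ‖WithLp.toLp 2 v‖ :=
  (LinearMap.toContinuousLinearMap (toEuclideanLin M)).le_opNorm (WithLp.toLp 2 v)

lemma norm_toLp_eq_sqrt_dotProduct (v : Fin n → ℝ) : ‖WithLp.toLp 2 v‖ = √(v ⬝ᵥ v) := by
  rw [EuclideanSpace.norm_eq]
  simp [dotProduct, sq]

open scoped MatrixOrder in
lemma nucNorm_eq_trace {A : Matrix (Fin n) (Fin n) ℝ} (hA : A.PosSemidef) :
    nucNorm A = A.trace := by
  have hAA : (Aᵀ * A).PosSemidef := by simpa using posSemidef_conjTranspose_mul_self A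
  have hAt : Aᵀ = A := by simpa using hA.1.eq
  have hsqrt : CFC.sqrt (Aᵀ * A) = A := by rw [hAt]; exact CFC.sqrt_mul_self A hA.nonneg
  conv_rhs => rw [← hsqrt, CFC.sqrt_eq_real_sqrt _ hAA.nonneg, cfcₙ_eq_cfc, hAA.1.cfc_eq,
    IsHermitian.cfc, Unitary.conjStarAlgAut_apply, trace_mul_cycle, Unitary.coe_star_mul_self,
    Matrix.one_mul, trace_diagonal]
  simp [nucNorm]

lemma frobNorm_le_nucNorm (M : Matrix (Fin n) (Fin n) ℝ) : frobNorm M ≤ nucNorm M := by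
  have hP : (Mᵀ * M).PosSemidef := by simpa using posSemidef_conjTranspose_mul_self M
  have hsq : (Mᵀ * M).trace = ∑ i, √(hP.1.eigenvalues i) ^ 2 := by
    rw [hP.1.trace_eq_sum_eigenvalues]
    exact Finset.sum_congr rfl fun i _ => by simp [Real.sq_sqrt (hP.eigenvalues_nonneg i)]
  rw [frobNorm, hsq, nucNorm, ← Real.sqrt_sq (Finset.sum_nonneg fun i _ => Real.sqrt_nonneg _)]
  exact Real.sqrt_le_sqrt (Finset.sum_sq_le_sq_sum_of_nonneg fun i _ => Real.sqrt_nonneg _)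

lemma frobNorm_le_trace {A : Matrix (Fin n) (Fin n) ℝ} (hA : A.PosSemidef) :
    frobNorm A ≤ A.trace :=
  (frobNorm_le_nucNorm A).trans_eq (nucNorm_eq_trace hA)

end Norms

section RankTwo

variable {n : ℕ} {x y : Fin n → ℝ}

lemma sq_frobNorm_vecMulVec_add_le (hx : x ⬝ᵥ x = 1) :
    frobNorm (vecMulVec x y + vecMulVec y x) ^ 2
      ≤ 2 * ((vecMulVec x y + vecMulVec y x) *ᵥ x ⬝ᵥ (vecMulVec x y + vecMulVec y x) *ᵥ x) := by
  have hc : y ⬝ᵥ x = x ⬝ᵥ y := dotProduct_comm y x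
  rw [sq_frobNorm]
  simp only [transpose_add, transpose_vecMulVec, add_mul, mul_add, vecMulVec_mul_vecMulVec,
    trace_add, trace_vecMulVec, add_mulVec, vecMulVec_mulVec, dotProduct_add, add_dotProduct,
    dotProduct_smul, smul_dotProduct, hx, hc]
  simp only [MulOpposite.smul_eq_mul_unop, MulOpposite.unop_op, smul_eq_mul]
  nlinarith [sq_nonneg (x ⬝ᵥ y)]

lemma frobNorm_vecMulVec_add_le (hx : x ⬝ᵥ x = 1) :
    frobNorm (vecMulVec x y + vecMulVec y x) ≤ √2 * opNorm (vecMulVec x y + vecMulVec y x) := by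
  set M := vecMulVec x y + vecMulVec y x
  have hMx : ‖WithLp.toLp 2 (M *ᵥ x)‖ ≤ opNorm M := by
    simpa [norm_toLp_eq_sqrt_dotProduct, hx] using norm_toLp_mulVec_le_opNorm_mul M x
  calc frobNorm M ≤ √(2 * (M *ᵥ x ⬝ᵥ M *ᵥ x)) :=
        Real.le_sqrt_of_sq_le (sq_frobNorm_vecMulVec_add_le hx)
    _ = √2 * ‖WithLp.toLp 2 (M *ᵥ x)‖ := by
        rw [Real.sqrt_mul zero_le_two, norm_toLp_eq_sqrt_dotProduct]
    _ ≤ √2 * opNorm M := by gcongr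

end RankTwo

section Projections

variable {n : ℕ} {x0 : Fin n → ℝ}

lemma vecMulVec_self_mul_self (hx0 : x0 ⬝ᵥ x0 = 1) :
    vecMulVec x0 x0 * vecMulVec x0 x0 = vecMulVec x0 x0 := by
  rw [vecMulVec_mul_vecMulVec, hx0, one_smul]

lemma one_sub_vecMulVec_mul_vecMulVec (hx0 : x0 ⬝ᵥ x0 = 1) :
    (1 - vecMulVec x0 x0) * vecMulVec x0 x0 = 0 := by
  rw [Matrix.sub_mul, Matrix.one_mul, vecMulVec_self_mul_self hx0, sub_self]

lemma one_sub_vecMulVec_mul_self (hx0 : x0 ⬝ᵥ x0 = 1) :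
    (1 - vecMulVec x0 x0) * (1 - vecMulVec x0 x0) = 1 - vecMulVec x0 x0 := by
  rw [Matrix.mul_sub, Matrix.mul_one, one_sub_vecMulVec_mul_vecMulVec hx0, sub_zero]

lemma one_sub_vecMulVec_mulVec_self (hx0 : x0 ⬝ᵥ x0 = 1) : (1 - vecMulVec x0 x0) *ᵥ x0 = 0 := by
  rw [sub_mulVec, one_mulVec, vecMulVec_mulVec, hx0]
  simp

lemma transpose_one_sub_vecMulVec : (1 - vecMulVec x0 x0)ᵀ = 1 - vecMulVec x0 x0 := by
  rw [transpose_sub, transpose_one, transpose_vecMulVec]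

lemma TperpProj_sub_vecMulVec (hx0 : x0 ⬝ᵥ x0 = 1) (X : Matrix (Fin n) (Fin n) ℝ) :
    TperpProj x0 (X - vecMulVec x0 x0) = TperpProj x0 X := by
  rw [TperpProj, TperpProj, Matrix.mul_sub (1 - vecMulVec x0 x0) X,
    Matrix.sub_mul ((1 - vecMulVec x0 x0) * X),
    one_sub_vecMulVec_mul_vecMulVec hx0, Matrix.zero_mul, sub_zero]

lemma TperpProj_posSemidef {X : Matrix (Fin n) (Fin n) ℝ} (hX : X.PosSemidef) :
    (TperpProj x0 X).PosSemidef := by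
  have h := hX.conjTranspose_mul_mul_same (1 - vecMulVec x0 x0)
  rwa [conjTranspose_eq_transpose_of_trivial, transpose_one_sub_vecMulVec] at h

lemma TperpProj_mulVec_self (hx0 : x0 ⬝ᵥ x0 = 1) (X : Matrix (Fin n) (Fin n) ℝ) :
    TperpProj x0 X *ᵥ x0 = 0 := by
  rw [TperpProj, ← mulVec_mulVec, one_sub_vecMulVec_mulVec_self hx0, mulVec_zero]

lemma TperpProj_TProj (hx0 : x0 ⬝ᵥ x0 = 1) (H : Matrix (Fin n) (Fin n) ℝ) :
    TperpProj x0 (TProj x0 H) = 0 := by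
  set Q := 1 - vecMulVec x0 x0
  have hQ : Q * Q = Q := one_sub_vecMulVec_mul_self hx0
  rw [TProj, TperpProj, TperpProj,
    show Q * (H - Q * H * Q) * Q = Q * H * Q - (Q * Q) * H * (Q * Q) by noncomm_ring, hQ,
    sub_self]

lemma TProj_add_TperpProj (H : Matrix (Fin n) (Fin n) ℝ) : TProj x0 H + TperpProj x0 H = H :=
  sub_add_cancel _ _

lemma trace_mul_TProj (hx0 : x0 ⬝ᵥ x0 = 1) (Y H : Matrix (Fin n) (Fin n) ℝ) :
    (Y * TProj x0 H).trace = (TProj x0 Y * TProj x0 H).trace := by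
  set Q := 1 - vecMulVec x0 x0
  have hperp : (Q * Y * Q * TProj x0 H).trace = 0 := by
    rw [show Q * Y * Q * TProj x0 H = Q * (Y * (Q * TProj x0 H)) by simp only [Matrix.mul_assoc],
      trace_mul_comm, show Y * (Q * TProj x0 H) * Q = Y * TperpProj x0 (TProj x0 H) by
        simp only [Q, TperpProj, Matrix.mul_assoc],
      TperpProj_TProj hx0, Matrix.mul_zero, trace_zero]
  rw [show TProj x0 Y = Y - Q * Y * Q from rfl, Matrix.sub_mul, trace_sub, hperp, sub_zero]

lemma exists_TProj_eq_vecMulVec_add {H : Matrix (Fin n) (Fin n) ℝ} (hH : Hᵀ = H) :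
    ∃ y, TProj x0 H = vecMulVec x0 y + vecMulVec y x0 := by
  refine ⟨H *ᵥ x0 - ((x0 ⬝ᵥ H *ᵥ x0) / 2) • x0, ?_⟩
  have hexpand : TProj x0 H = vecMulVec x0 x0 * H + H * vecMulVec x0 x0
      - vecMulVec x0 x0 * H * vecMulVec x0 x0 := by
    rw [TProj, TperpProj]; noncomm_ring
  have hxH : x0 ᵥ* H = H *ᵥ x0 := by rw [← vecMul_transpose, hH]
  rw [hexpand, vecMulVec_mul, hxH, mul_vecMulVec, vecMulVec_mul_vecMulVec]
  ext i j
  simp only [Matrix.add_apply, Matrix.sub_apply, vecMulVec_apply, Pi.sub_apply, Pi.smul_apply,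
    smul_eq_mul, dotProduct_comm (H *ᵥ x0) x0]
  ring

end Projections

open scoped MatrixOrder in
lemma trace_le_trace_mul_of_mulVec_eq_zero {n : ℕ} {x0 : Fin n → ℝ} {Y M : Matrix (Fin n) (Fin n) ℝ}
    (hY : ∀ u, u ⬝ᵥ x0 = 0 → u ⬝ᵥ u ≤ u ⬝ᵥ Y *ᵥ u) (hM : M.PosSemidef) (hMx : M *ᵥ x0 = 0) :
    M.trace ≤ (Y * M).trace := by
  obtain ⟨B, rfl⟩ := CStarAlgebra.nonneg_iff_eq_star_mul_self.mp hM.nonneg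
  rw [star_eq_conjTranspose, conjTranspose_mul_self_mulVec_eq_zero] at hMx
  have hrows : ∀ j, B j ⬝ᵥ x0 = 0 := fun j => congrFun hMx j
  rw [trace_mul_comm (star B), ← Matrix.mul_assoc, trace_mul_comm (Y * star B)]
  calc (B * star B).trace = ∑ j, B j ⬝ᵥ B j := by simp [trace, mul_apply, dotProduct]
    _ ≤ ∑ j, B j ⬝ᵥ Y *ᵥ B j := Finset.sum_le_sum fun j _ => hY (B j) (hrows j)
    _ = (B * (Y * star B)).trace := by
        simp [trace, mul_apply, dotProduct, mulVec, Finset.mul_sum, mul_left_comm]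

section Measurements

variable {m n : ℕ}

/-- The measurement map `A` of the paper. -/
def measOp (z : Fin m → Fin n → ℝ) (M : Matrix (Fin n) (Fin n) ℝ) : Fin m → ℝ :=
  fun i => z i ⬝ᵥ M *ᵥ z i

lemma measOp_sub (z : Fin m → Fin n → ℝ) (A B : Matrix (Fin n) (Fin n) ℝ) :
    measOp z (A - B) = measOp z A - measOp z B := by
  ext i
  simp [measOp, sub_mulVec]

lemma trace_sum_smul_vecMulVec_mul (lam : Fin m → ℝ) (z : Fin m → Fin n → ℝ)
    (M : Matrix (Fin n) (Fin n) ℝ) :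
    ((∑ i, lam i • vecMulVec (z i) (z i)) * M).trace = ∑ i, lam i * measOp z M i := by
  simp only [Finset.sum_mul, trace_sum, smul_mul, trace_smul, vecMulVec_mul, trace_vecMulVec,
    measOp, dotProduct_mulVec, smul_eq_mul]
  exact Finset.sum_congr rfl fun i _ => congrArg _ (dotProduct_comm _ _)

lemma inv_mul_sum_abs_le_sqrt_sum_sq (a : Fin m → ℝ) :
    1 / (m : ℝ) * ∑ i, |a i| ≤ √(∑ i, a i ^ 2) := by
  rcases Nat.eq_zero_or_pos m with rfl | hm
  · simp
  have hm1 : (1 : ℝ) ≤ m := by exact_mod_cast hm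
  have hcs : (∑ i, |a i|) ^ 2 ≤ m * ∑ i, a i ^ 2 := by
    simpa [sq_abs] using sq_sum_le_card_mul_sum_sq (s := Finset.univ) (f := fun i => |a i|)
  rw [one_div, inv_mul_le_iff₀ (by positivity)]
  refine le_of_pow_le_pow_left₀ two_ne_zero (by positivity) ?_
  rw [mul_pow, Real.sq_sqrt (by positivity)]
  nlinarith [(Finset.sum_nonneg fun i _ => sq_nonneg (a i) : 0 ≤ ∑ i, a i ^ 2)]

lemma abs_sum_mul_le_sum_abs_mul_sqrt (lam a : Fin m → ℝ) :
    |∑ i, lam i * a i| ≤ (∑ i, |lam i|) * √(∑ i, a i ^ 2) := by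
  calc |∑ i, lam i * a i| ≤ ∑ i, |lam i| * |a i| := by
        simpa only [abs_mul] using Finset.abs_sum_le_sum_abs (fun i => lam i * a i) Finset.univ
    _ ≤ ∑ i, |lam i| * √(∑ j, a j ^ 2) := by
        gcongr with i
        exact Real.abs_le_sqrt
          (Finset.single_le_sum (f := fun j => a j ^ 2) (fun j _ => sq_nonneg _)
            (Finset.mem_univ i))
    _ = (∑ i, |lam i|) * √(∑ i, a i ^ 2) := (Finset.sum_mul _ _ _).symm

end Measurements

section Stability

variable {m n : ℕ} {z : Fin m → Fin n → ℝ} {x0 : Fin n → ℝ} {H : Matrix (Fin n) (Fin n) ℝ}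
  {δ ε : ℝ}

lemma mul_opNorm_TProj_le {c : ℝ} (hpsd : (TperpProj x0 H).PosSemidef)
    (hUpper : 1 / (m : ℝ) * ∑ i, |measOp z (TperpProj x0 H) i|
      ≤ (1 + δ) * nucNorm (TperpProj x0 H))
    (hLower : c * opNorm (TProj x0 H) ≤ 1 / (m : ℝ) * ∑ i, |measOp z (TProj x0 H) i|)
    (hres : √(∑ i, measOp z H i ^ 2) ≤ ε) :
    c * opNorm (TProj x0 H) ≤ ε + (1 + δ) * (TperpProj x0 H).trace := by
  have htri : ∑ i, |measOp z (TProj x0 H) i|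
      ≤ ∑ i, |measOp z H i| + ∑ i, |measOp z (TperpProj x0 H) i| := by
    rw [← Finset.sum_add_distrib, TProj, measOp_sub]
    exact Finset.sum_le_sum fun i _ => abs_sub _ _
  calc c * opNorm (TProj x0 H) ≤ 1 / (m : ℝ) * ∑ i, |measOp z (TProj x0 H) i| := hLower
    _ ≤ 1 / (m : ℝ) * ∑ i, |measOp z H i|
          + 1 / (m : ℝ) * ∑ i, |measOp z (TperpProj x0 H) i| := by
        rw [← mul_add]; gcongr
    _ ≤ ε + (1 + δ) * nucNorm (TperpProj x0 H) :=
        add_le_add ((inv_mul_sum_abs_le_sqrt_sum_sq _).trans hres) hUpper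
    _ = ε + (1 + δ) * (TperpProj x0 H).trace := by rw [nucNorm_eq_trace hpsd]

lemma trace_TperpProj_le (hx0 : x0 ⬝ᵥ x0 = 1) {lam : Fin m → ℝ} {L β : ℝ}
    (hpsd : (TperpProj x0 H).PosSemidef)
    (hYT : nucNorm (TProj x0 (∑ i, lam i • vecMulVec (z i) (z i))) ≤ β)
    (hYperp : ∀ u, u ⬝ᵥ x0 = 0 → u ⬝ᵥ u ≤ u ⬝ᵥ (∑ i, lam i • vecMulVec (z i) (z i)) *ᵥ u)
    (hlam : ∑ i, |lam i| ≤ L) (hres : √(∑ i, measOp z H i ^ 2) ≤ ε) :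
    (TperpProj x0 H).trace ≤ L * ε + β * frobNorm (TProj x0 H) := by
  set Y := ∑ i, lam i • vecMulVec (z i) (z i)
  have hL : 0 ≤ L := (Finset.sum_nonneg fun i _ => abs_nonneg (lam i)).trans hlam
  have hYH : |(Y * H).trace| ≤ L * ε := by
    rw [trace_sum_smul_vecMulVec_mul]
    exact (abs_sum_mul_le_sum_abs_mul_sqrt _ _).trans (mul_le_mul hlam hres (Real.sqrt_nonneg _) hL)
  have hYTH := abs_trace_mul_le_frobNorm_mul (TProj x0 Y) (TProj x0 H)
  calc (TperpProj x0 H).trace ≤ (Y * TperpProj x0 H).trace :=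
        trace_le_trace_mul_of_mulVec_eq_zero hYperp hpsd (TperpProj_mulVec_self hx0 H)
    _ = (Y * H).trace - (TProj x0 Y * TProj x0 H).trace := by
        rw [← trace_mul_TProj hx0, ← trace_sub, ← Matrix.mul_sub, TProj, sub_sub_cancel]
    _ ≤ |(Y * H).trace| + frobNorm (TProj x0 Y) * frobNorm (TProj x0 H) := by
        linarith [le_abs_self (Y * H).trace, neg_abs_le (TProj x0 Y * TProj x0 H).trace]
    _ ≤ L * ε + β * frobNorm (TProj x0 H) :=
        add_le_add hYH (mul_le_mul_of_nonneg_right ((frobNorm_le_nucNorm _).trans hYT)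
          (frobNorm_nonneg _))

end Stability

lemma stability_constant_bound {δ ε a f t g : ℝ} (hδ0 : 0 ≤ δ) (hδ : δ ≤ 1 / 9) (hε : 0 ≤ ε)
    (ha : 0 ≤ a) (hTan : 0.94 * (1 - δ) * a ≤ ε + (1 + δ) * t) (hPerp : t ≤ 5 * ε + 1 / 2 * f)
    (hf : f ≤ √2 * a) (hg : g ≤ f + t) : g ≤ 300 * ε := by
  have hsqrt2 : √2 ≤ 1.4143 := by nlinarith [Real.sq_sqrt zero_le_two, Real.sqrt_nonneg 2]
  have hf' : f ≤ 1.4143 * a := hf.trans (mul_le_mul_of_nonneg_right hsqrt2 ha)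
  have ht : t ≤ 5 * ε + 0.70715 * a := by linarith
  have ha' : a ≤ 132 * ε := by
    nlinarith [mul_nonneg (by linarith : 0 ≤ 1 + δ) (by linarith : 0 ≤ 5 * ε + 0.70715 * a - t),
      mul_nonneg (by linarith : (0 : ℝ) ≤ 1 / 9 - δ) ha,
      mul_nonneg (by linarith : (0 : ℝ) ≤ 1 / 9 - δ) hε]
  linarith

/-- Stability: under the `ℓ¹`-isometry bounds and an inexact dual certificate
`Y = A^*(λ)` with `‖λ‖₁ ≤ 5`, any feasible `X ⪰ 0` with `‖A(X) − b‖₂ ≤ ε` satisfies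
`‖X − X₀‖₂ ≤ Cε` for a constant `C > 0` depending only on `δ`. -/
theorem noisy_recovery_stability (δ : ℝ) (hδ0 : 0 ≤ δ) (hδ : δ ≤ 1 / 9) :
    ∃ C : ℝ, 0 < C ∧
      ∀ (n m : ℕ) (z : Fin m → Fin n → ℝ) (x0 : Fin n → ℝ) (lam : Fin m → ℝ) (ε : ℝ)
        (X : Matrix (Fin n) (Fin n) ℝ),
        (∑ i, (x0 i) ^ 2 = 1) →
        (∀ W : Matrix (Fin n) (Fin n) ℝ, W.PosSemidef →
          (1 / (m : ℝ)) * ∑ i, |z i ⬝ᵥ W.mulVec (z i)| ≤ (1 + δ) * nucNorm W) →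
        (∀ y : Fin n → ℝ,
          0.94 * (1 - δ) * opNorm (vecMulVec x0 y + vecMulVec y x0) ≤
            (1 / (m : ℝ)) * ∑ i, |z i ⬝ᵥ (vecMulVec x0 y + vecMulVec y x0).mulVec (z i)|) →
        nucNorm (TProj x0 (∑ i, lam i • vecMulVec (z i) (z i))) ≤ 1 / 2 →
        (∀ u : Fin n → ℝ, u ⬝ᵥ x0 = 0 →
          ∑ j, (u j) ^ 2 ≤ u ⬝ᵥ (∑ i, lam i • vecMulVec (z i) (z i)).mulVec u) →
        (∑ i, |lam i| ≤ 5) →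
        X.PosSemidef →
        Real.sqrt (∑ i,
            (z i ⬝ᵥ X.mulVec (z i) - z i ⬝ᵥ (vecMulVec x0 x0).mulVec (z i)) ^ 2) ≤ ε →
        frobNorm (X - vecMulVec x0 x0) ≤ C * ε := by
  refine ⟨300, by norm_num, ?_⟩
  intro n m z x0 lam ε X hx0 hUpper hLower hYT hYperp hlam hX hres
  have hsq (v : Fin n → ℝ) : v ⬝ᵥ v = ∑ j, v j ^ 2 := by simp [dotProduct, sq]
  have hx0' : x0 ⬝ᵥ x0 = 1 := (hsq x0).trans hx0
  set H := X - vecMulVec x0 x0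
  have hH : Hᵀ = H := by
    rw [transpose_sub, transpose_vecMulVec, ← conjTranspose_eq_transpose_of_trivial, hX.1.eq]
  have hpsd : (TperpProj x0 H).PosSemidef := by
    rw [TperpProj_sub_vecMulVec hx0']; exact TperpProj_posSemidef hX
  have hresH : √(∑ i, measOp z H i ^ 2) ≤ ε := by simpa [measOp, H, sub_mulVec] using hres
  obtain ⟨y, hy⟩ := exists_TProj_eq_vecMulVec_add (x0 := x0) hH
  have hTan := mul_opNorm_TProj_le hpsd (hUpper _ hpsd) (by rw [hy]; exact hLower y) hresH
  have hPerp := trace_TperpProj_le hx0' hpsd hYT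
    (fun u hu => (hsq u).trans_le (hYperp u hu)) hlam hresH
  have hFrob : frobNorm (TProj x0 H) ≤ √2 * opNorm (TProj x0 H) := by
    rw [hy]; exact frobNorm_vecMulVec_add_le hx0'
  have hSplit : frobNorm H ≤ frobNorm (TProj x0 H) + (TperpProj x0 H).trace := by
    conv_lhs => rw [← TProj_add_TperpProj (x0 := x0) H]
    exact (frobNorm_add_le _ _).trans (add_le_add_right (frobNorm_le_trace hpsd) _)
  exact stability_constant_bound hδ0 hδ ((Real.sqrt_nonneg _).trans hresH) (norm_nonneg _)
    hTan hPerp hFrob hSplit
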